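/- Let (X,T) be a topological dynamical system. Then: (1) if (x0,x1,x2,x3) ∈ 𝒫 then (x1,x0,x3,x2) ∈ 𝒫 and (x0,x2,x1,x3) ∈ 𝒫; (2) for every 𝐱 ∈ 𝒫 one has (𝐱,𝐱) ∈ 𝒬 (under the identification X⁸ = X⁴ × X⁴); (3) if (x0,x1,x2,x3,x4,x5,x6,x7) ∈ 𝒬 then each of its faces (x0,x1,x2,x3), (x4,x5,x6,x7), (x0,x1,x4,x5), (x2,x3,x6,x7), (x0,x2,x4,x6) and (x1,x3,x5,x7) belongs to 𝒫. If moreover (X,T) is minimal, then: (4) for all a,b ∈ X, (a,b,a,b) ∈ 𝒫; (5) for all x0,x1,x2 ∈ X there exists x3 ∈ X with (x0,x1,x2,x3) ∈ 𝒫. -/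

import Mathlib

open Filter Topology

/-- The `n`-th iterate (`n : ℤ`) of a homeomorphism `T : X → X`. -/
def iterZ {X : Type*} [TopologicalSpace X] (T : X ≃ₜ X) (n : ℤ) : X → X :=
  fun x => (T.toEquiv ^ n) x

section Defs

variable {X : Type*} [TopologicalSpace X]

/-- The set of parallelograms `𝒫`: the closure in `X⁴` of
`{(x, Tᵐx, Tⁿx, Tᵐ⁺ⁿx) : x ∈ X, m, n ∈ ℤ}`. -/
def Para (T : X ≃ₜ X) : Set (X × X × X × X) :=
  closure {q | ∃ (x : X) (m n : ℤ),
    q = (x, iterZ T m x, iterZ T n x, iterZ T (m + n) x)}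

/-- The set of parallelepipeds `𝒬`: the closure in `X⁸ = X⁴ × X⁴` of
`{(x, Tᵐx, Tⁿx, Tᵐ⁺ⁿx, Tᵖx, Tᵐ⁺ᵖx, Tⁿ⁺ᵖx, Tᵐ⁺ⁿ⁺ᵖx) : x ∈ X, m, n, p ∈ ℤ}`. -/
def Pip (T : X ≃ₜ X) : Set ((X × X × X × X) × (X × X × X × X)) :=
  closure {q | ∃ (x : X) (m n p : ℤ),
    q = ((x, iterZ T m x, iterZ T n x, iterZ T (m + n) x),
         (iterZ T p x, iterZ T (m + p) x, iterZ T (n + p) x, iterZ T (m + n + p) x))}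

end Defs

section MetricDefs

variable {X : Type*} [MetricSpace X]

/-- `(X, T)` is transitive: some point has dense orbit `{Tⁿx : n ∈ ℤ}`. -/
def IsTransitive (T : X ≃ₜ X) : Prop :=
  ∃ x : X, Dense (Set.range fun n : ℤ => iterZ T n x)

/-- `(X, T)` is minimal: every point has dense orbit. -/
def IsMinimal (T : X ≃ₜ X) : Prop :=
  ∀ x : X, Dense (Set.range fun n : ℤ => iterZ T n x)

/-- `(x, y)` is a proximal pair: `inf_{n ∈ ℤ} d(Tⁿx, Tⁿy) = 0`. -/
def ProximalPair (T : X ≃ₜ X) (x y : X) : Prop :=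
  ⨅ n : ℤ, dist (iterZ T n x) (iterZ T n y) = 0

/-- `(X, T)` is distal: every pair of distinct points is distal,
i.e. `inf_{n ∈ ℤ} d(Tⁿx, Tⁿy) > 0`. -/
def IsDistal (T : X ≃ₜ X) : Prop :=
  ∀ x y : X, x ≠ y → 0 < ⨅ n : ℤ, dist (iterZ T n x) (iterZ T n y)

/-- The regionally proximal relation `RP`. -/
def RP (T : X ≃ₜ X) (x y : X) : Prop :=
  ∀ ε > 0, ∃ x' y' : X, ∃ n : ℤ,
    dist x' x < ε ∧ dist y' y < ε ∧ dist (iterZ T n x') (iterZ T n y') < ε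

/-- The doubly regionally proximal relation `RP²`. -/
def RP2 (T : X ≃ₜ X) (x y : X) : Prop :=
  ∀ ε > 0, ∃ x' y' : X, ∃ m n : ℤ,
    dist x' x < ε ∧ dist y' y < ε ∧
    dist (iterZ T m x') (iterZ T m y') < ε ∧
    dist (iterZ T n x') (iterZ T n y') < ε ∧
    dist (iterZ T (m + n) x') (iterZ T (m + n) y') < ε

/-- The strongly doubly regionally proximal relation `RP²ₛ`. -/
def RP2S (T : X ≃ₜ X) (x y : X) : Prop :=
  ∀ ε > 0, ∃ x' y' : X, ∃ m n : ℤ,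
    dist x' x < ε ∧ dist y' y < ε ∧
    dist (iterZ T m x') y < ε ∧ dist (iterZ T n x') y < ε ∧
    dist (iterZ T (m + n) x') y < ε ∧
    dist (iterZ T m y') y < ε ∧ dist (iterZ T n y') y < ε ∧
    dist (iterZ T (m + n) y') y < ε

end MetricDefs

section Helpers

variable {X : Type*} [TopologicalSpace X]

@[simp] lemma iterZ_add (T : X ≃ₜ X) (m n : ℤ) (x : X) :
    iterZ T m (iterZ T n x) = iterZ T (m + n) x := by
  simp [iterZ, ← Equiv.Perm.mul_apply, ← zpow_add]

@[simp] lemma iterZ_zero (T : X ≃ₜ X) (x : X) : iterZ T 0 x = x := by simp [iterZ]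

@[continuity, fun_prop] lemma continuous_iterZ (T : X ≃ₜ X) (n : ℤ) :
    Continuous (iterZ T n) := by
  induction n using Int.induction_on with
  | zero => rw [show iterZ T 0 = id from funext (iterZ_zero T)]; exact continuous_id
  | succ k ih =>
      have : iterZ T (k + 1) = iterZ T k ∘ T := by
        funext x; simp [iterZ, zpow_add, Equiv.Perm.mul_apply]
      rw [this]; exact ih.comp T.continuous
  | pred k ih =>
      have : iterZ T (-k - 1) = iterZ T (-k) ∘ T.symm := by
        funext x
        simp [iterZ, zpow_sub, Equiv.Perm.mul_apply, sub_eq_add_neg, zpow_add,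
          Equiv.Perm.inv_def]
      rw [this]; exact ih.comp T.symm.continuous

lemma iterZ_congr (T : X ≃ₜ X) {m n : ℤ} (h : m = n) (x : X) :
    iterZ T m x = iterZ T n x := by rw [h]

/-- Transport along a continuous map preserving generators. -/
lemma para_map (T : X ≃ₜ X) {f : X × X × X × X → X × X × X × X} (hf : Continuous f)
    (hgen : ∀ (x : X) (m n : ℤ), ∃ (y : X) (m' n' : ℤ),
      f (x, iterZ T m x, iterZ T n x, iterZ T (m + n) x)
        = (y, iterZ T m' y, iterZ T n' y, iterZ T (m' + n') y))
    {q : X × X × X × X} (hq : q ∈ Para T) : f q ∈ Para T := by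
  refine map_mem_closure hf hq ?_
  rintro _ ⟨x, m, n, rfl⟩
  obtain ⟨y, m', n', h⟩ := hgen x m n
  exact ⟨y, m', n', h⟩

lemma pip_map (T : X ≃ₜ X)
    {f : (X × X × X × X) × (X × X × X × X) → X × X × X × X} (hf : Continuous f)
    (hgen : ∀ (x : X) (m n p : ℤ), ∃ (y : X) (m' n' : ℤ),
      f ((x, iterZ T m x, iterZ T n x, iterZ T (m + n) x),
         (iterZ T p x, iterZ T (m + p) x, iterZ T (n + p) x, iterZ T (m + n + p) x))
        = (y, iterZ T m' y, iterZ T n' y, iterZ T (m' + n') y))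
    {q} (hq : q ∈ Pip T) : f q ∈ Para T := by
  refine map_mem_closure hf hq ?_
  rintro _ ⟨x, m, n, p, rfl⟩
  obtain ⟨y, m', n', h⟩ := hgen x m n p
  exact ⟨y, m', n', h⟩

lemma para_to_pip (T : X ≃ₜ X)
    {f : X × X × X × X → (X × X × X × X) × (X × X × X × X)} (hf : Continuous f)
    (hgen : ∀ (x : X) (m n : ℤ), ∃ (y : X) (m' n' p' : ℤ),
      f (x, iterZ T m x, iterZ T n x, iterZ T (m + n) x)
        = ((y, iterZ T m' y, iterZ T n' y, iterZ T (m' + n') y),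
           (iterZ T p' y, iterZ T (m' + p') y, iterZ T (n' + p') y,
            iterZ T (m' + n' + p') y)))
    {q} (hq : q ∈ Para T) : f q ∈ Pip T := by
  refine map_mem_closure hf hq ?_
  rintro _ ⟨x, m, n, rfl⟩
  obtain ⟨y, m', n', p', h⟩ := hgen x m n
  exact ⟨y, m', n', p', h⟩

end Helpers

/-- First properties of `𝒫` and `𝒬`. -/
theorem stmt3 {X : Type*} [MetricSpace X] [CompactSpace X] [Nonempty X]
    (T : X ≃ₜ X) :
    (∀ x0 x1 x2 x3 : X, (x0, x1, x2, x3) ∈ Para T →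
      (x1, x0, x3, x2) ∈ Para T ∧ (x0, x2, x1, x3) ∈ Para T) ∧
    (∀ q ∈ Para T, (q, q) ∈ Pip T) ∧
    (∀ x0 x1 x2 x3 x4 x5 x6 x7 : X, ((x0, x1, x2, x3), (x4, x5, x6, x7)) ∈ Pip T →
      (x0, x1, x2, x3) ∈ Para T ∧ (x4, x5, x6, x7) ∈ Para T ∧
      (x0, x1, x4, x5) ∈ Para T ∧ (x2, x3, x6, x7) ∈ Para T ∧
      (x0, x2, x4, x6) ∈ Para T ∧ (x1, x3, x5, x7) ∈ Para T) ∧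
    (IsMinimal T →
      (∀ a b : X, (a, b, a, b) ∈ Para T) ∧
      (∀ x0 x1 x2 : X, ∃ x3 : X, (x0, x1, x2, x3) ∈ Para T)) := by
  have habab : IsMinimal T → ∀ a b : X, (a, b, a, b) ∈ Para T := by
    intro hmin a b
    have hb : b ∈ closure (Set.range fun n : ℤ => iterZ T n a) := hmin a b
    have : (fun w : X => (a, w, a, w)) b ∈ Para T := by
      refine map_mem_closure (f := fun w : X => (a, w, a, w)) (by fun_prop) hb ?_
      rintro _ ⟨j, rfl⟩
      exact ⟨a, j, 0, by simp [Prod.ext_iff]⟩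
    simpa using this
  refine ⟨?_, ?_, ?_, fun hmin => ⟨habab hmin, ?_⟩⟩
  · -- symmetries
    intro x0 x1 x2 x3 hq
    constructor
    · have := para_map T (f := fun q : X × X × X × X => (q.2.1, q.1, q.2.2.2, q.2.2.1))
        (by fun_prop)
        (fun x m n => ⟨iterZ T m x, -m, n, by
          simp [Prod.ext_iff, iterZ_add, add_comm, add_assoc, add_left_comm]⟩) hq
      simpa using this
    · have := para_map T (f := fun q : X × X × X × X => (q.1, q.2.2.1, q.2.1, q.2.2.2))
        (by fun_prop)
        (fun x m n => ⟨x, n, m, by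
          simp [Prod.ext_iff, iterZ_add, add_comm, add_assoc, add_left_comm]⟩) hq
      simpa using this
  · -- doubling
    intro q hq
    exact para_to_pip T (f := fun q => (q, q)) (by fun_prop)
      (fun x m n => ⟨x, m, n, 0, by simp [Prod.ext_iff]⟩) hq
  · -- faces
    intro x0 x1 x2 x3 x4 x5 x6 x7 hq
    refine ⟨?_, ?_, ?_, ?_, ?_, ?_⟩
    · have := pip_map T (f := fun q => q.1) (by fun_prop)
        (fun x m n p => ⟨x, m, n, rfl⟩) hq
      simpa using this
    · have := pip_map T (f := fun q => q.2) (by fun_prop)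
        (fun x m n p => ⟨iterZ T p x, m, n, by
          simp [Prod.ext_iff, iterZ_add, add_comm, add_assoc, add_left_comm]⟩) hq
      simpa using this
    · have := pip_map T
        (f := fun q : (X × X × X × X) × (X × X × X × X) => (q.1.1, q.1.2.1, q.2.1, q.2.2.1))
        (by fun_prop) (fun x m n p => ⟨x, m, p, rfl⟩) hq
      simpa using this
    · have := pip_map T
        (f := fun q : (X × X × X × X) × (X × X × X × X) =>
          (q.1.2.2.1, q.1.2.2.2, q.2.2.2.1, q.2.2.2.2))
        (by fun_prop)
        (fun x m n p => ⟨iterZ T n x, m, p, by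
          simp [Prod.ext_iff, iterZ_add, add_comm, add_assoc, add_left_comm]⟩) hq
      simpa using this
    · have := pip_map T
        (f := fun q : (X × X × X × X) × (X × X × X × X) =>
          (q.1.1, q.1.2.2.1, q.2.1, q.2.2.2.1))
        (by fun_prop) (fun x m n p => ⟨x, n, p, rfl⟩) hq
      simpa using this
    · have := pip_map T
        (f := fun q : (X × X × X × X) × (X × X × X × X) =>
          (q.1.2.1, q.1.2.2.2, q.2.2.1, q.2.2.2.2))
        (by fun_prop)
        (fun x m n p => ⟨iterZ T m x, n, p, by
          simp [Prod.ext_iff, iterZ_add, add_comm, add_assoc, add_left_comm]⟩) hq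
      simpa using this
  · -- completion of parallelograms
    intro x0 x1 x2
    have h1 : ∀ k : ℤ, (x0, x1, iterZ T k x0, iterZ T k x1) ∈ Para T := by
      intro k
      have := para_map T
        (f := fun q : X × X × X × X => (q.1, q.2.1, iterZ T k q.2.2.1, iterZ T k q.2.2.2))
        (by fun_prop)
        (fun x m n => ⟨x, m, n + k, by
          simp [Prod.ext_iff, iterZ_add, add_comm, add_assoc, add_left_comm]⟩)
        (habab hmin x0 x1)
      simpa using this
    have hx2 : x2 ∈ closure (Set.range fun j : ℤ => iterZ T j x0) := hmin x0 x2
    obtain ⟨u, hu, hul⟩ := mem_closure_iff_seq_limit.1 hx2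
    choose k hk using hu
    obtain ⟨x3, -, φ, hφ, hv⟩ := isCompact_univ.tendsto_subseq
      (x := fun i => iterZ T (k i) x1) (fun i => Set.mem_univ _)
    refine ⟨x3, ?_⟩
    have hclosed : IsClosed (Para T) := isClosed_closure
    have htd : Filter.Tendsto (fun i => (x0, x1, u (φ i), iterZ T (k (φ i)) x1))
        Filter.atTop (nhds (x0, x1, x2, x3)) :=
      tendsto_const_nhds.prodMk_nhds (tendsto_const_nhds.prodMk_nhds
        ((hul.comp hφ.tendsto_atTop).prodMk_nhds hv))
    refine hclosed.mem_of_tendsto htd ?_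
    filter_upwards with i
    rw [← hk (φ i)]
    exact h1 (k (φ i))
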